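/- arXiv:1209.2575 — 3 statements merged into one kernel-verified Lean document; each statement's English description precedes it below -/
import Mathlib

section
/- Let x₀ > 0 and define the Chebyshev coefficients of L(x) = x log x on [0, x₀] by a_k = (2/π)·∫₀^π L((x₀/2)(cos t + 1))·cos(kt) dt. Then a₀ = x₀(log(x₀/4) + 1), a₁ = (x₀/4)(2 log(x₀/4) + 3), and a_k = (-1)^k x₀ / (k(k²-1)) for all k ≥ 2. -/
/-!
With `c = x₀ / 2`, the identity `c y log (c y) = y · c log c + c · y log y` splits each coefficient
into the cosine coefficients of `cos t + 1` and of `(cos t + 1) log (cos t + 1)`. Multiplying by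
`cos t + 1` averages neighbouring cosine coefficients, so everything reduces to
`J n = ∫₀^π cos (n t) log (cos t + 1) dt`. From `1 - cos t = 2 sin² (t / 2)` and
`∫₀^{π/2} log sin = -(π / 2) log 2` one gets `J 0 = -π log 2`. For `n ≥ 1`, the function
`sin (n t) log (cos t + 1)` is continuous on `[0, π]` and vanishes at both ends, so integrating its
derivative gives `n J n = ∫₀^π sin (n t) tan (t / 2) dt = (-1)^(n+1) π`.
-/

open Real intervalIntegral
open MeasureTheory (volume)

noncomputable def cosCoeff (f : ℝ → ℝ) (ν : ℝ) : ℝ := ∫ t in 0..π, cos (ν * t) * f t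

theorem cosCoeff_neg (f : ℝ → ℝ) (ν : ℝ) : cosCoeff f (-ν) = cosCoeff f ν := by
  simp only [cosCoeff, neg_mul, cos_neg]

theorem cosCoeff_one (n : ℕ) : cosCoeff 1 n = if n = 0 then π else 0 := by
  simp only [cosCoeff, Pi.one_apply, mul_one]
  split_ifs with hn
  · simp [hn]
  · rw [integral_comp_mul_left cos (Nat.cast_ne_zero.mpr hn), integral_cos, sin_nat_mul_pi]
    simp

theorem cos_mul_mul_cos_add_one (ν t : ℝ) :
    cos (ν * t) * (cos t + 1) = cos (ν * t) + (cos ((ν + 1) * t) + cos ((ν - 1) * t)) / 2 := by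
  rw [add_mul, sub_mul, one_mul, cos_add, cos_sub]
  ring

theorem cosCoeff_cos_add_one_mul {f : ℝ → ℝ} (hf : IntervalIntegrable f volume 0 π) (ν : ℝ) :
    cosCoeff (fun t => (cos t + 1) * f t) ν =
      cosCoeff f ν + (cosCoeff f (ν + 1) + cosCoeff f (ν - 1)) / 2 := by
  have hint (μ : ℝ) : IntervalIntegrable (fun t => cos (μ * t) * f t) volume 0 π :=
    hf.continuousOn_mul (by fun_prop)
  calc cosCoeff (fun t => (cos t + 1) * f t) ν
    _ = ∫ t in 0..π, (cos (ν * t) * f t +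
          (cos ((ν + 1) * t) * f t + cos ((ν - 1) * t) * f t) / 2) := by
      unfold cosCoeff
      congr 1
      ext t
      rw [← mul_assoc, cos_mul_mul_cos_add_one]
      ring
    _ = _ := by
      rw [integral_add (hint ν) (((hint _).add (hint _)).div_const 2), integral_div,
        integral_add (hint _) (hint _)]
      rfl

theorem cos_add_one_eq_two_mul_cos_half_sq (t : ℝ) : cos t + 1 = 2 * cos (t / 2) ^ 2 := by
  rw [cos_sq, mul_div_cancel₀ t two_ne_zero]
  ring

theorem cos_add_one_pos {t : ℝ} (h₁ : -π < t) (h₂ : t < π) : 0 < cos t + 1 := by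
  rw [cos_add_one_eq_two_mul_cos_half_sq]
  have := cos_pos_of_mem_Ioo ⟨by linarith, by linarith⟩ (x := t / 2)
  positivity

theorem intervalIntegrable_log_cos_add_one (a b : ℝ) :
    IntervalIntegrable (fun t => log (cos t + 1)) volume a b :=
  (analyticOnNhd_cos.add analyticOnNhd_const).meromorphicOn.intervalIntegrable_log

theorem intervalIntegrable_mul_log_cos_add_one {g : ℝ → ℝ} (hg : Continuous g) (a b : ℝ) :
    IntervalIntegrable (fun t => g t * log (cos t + 1)) volume a b :=
  (intervalIntegrable_log_cos_add_one a b).continuousOn_mul hg.continuousOn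

theorem cosCoeff_log_cos_add_one_zero : cosCoeff (fun t => log (cos t + 1)) 0 = -π * log 2 := by
  simp only [cosCoeff, zero_mul, cos_zero, one_mul]
  calc ∫ t in 0..π, log (cos t + 1)
    _ = ∫ t in 0..π, log (1 - cos t) := by
      simpa [cos_pi_sub, neg_add_eq_sub] using
        (integral_comp_sub_left (fun t => log (cos t + 1)) π (a := 0) (b := π)).symm
    _ = ∫ t in 0..π, (log 2 + 2 * log (sin (t / 2))) := by
      refine integral_congr_ae (Filter.Eventually.of_forall fun t ht => ?_)
      rw [Set.uIoc_of_le pi_pos.le] at ht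
      have hsin : 0 < sin (t / 2) :=
        sin_pos_of_pos_of_lt_pi (by linarith [ht.1]) (by linarith [ht.2, pi_pos])
      have hcos : 1 - cos t = 2 * sin (t / 2) ^ 2 := by
        rw [sin_sq_eq_half_sub, mul_div_cancel₀ t two_ne_zero]
        ring
      rw [hcos, log_mul two_ne_zero (by positivity), log_pow]
      push_cast
      ring
    _ = π * log 2 + 2 * (2 * ∫ s in 0..π / 2, log (sin s)) := by
      rw [integral_add intervalIntegrable_const, integral_const_mul,
        integral_comp_div (fun s => log (sin s)) two_ne_zero]
      · simp
      · simpa [div_eq_inv_mul] using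
          ((intervalIntegrable_log_sin (a := 0) (b := π / 2)).comp_mul_left (c := 2⁻¹)).const_mul 2
    _ = -π * log 2 := by
      rw [integral_log_sin_zero_pi_div_two]
      ring

-- Also where `cos (t / 2) = 0`, since there both sides vanish (`log 0 = 0`).
theorem sin_mul_log_cos_add_one (t : ℝ) :
    sin t * log (cos t + 1) =
      sin t * log 2 + 4 * sin (t / 2) * (cos (t / 2) * log (cos (t / 2))) := by
  have hsin : sin t = 2 * sin (t / 2) * cos (t / 2) := by
    rw [← sin_two_mul, mul_div_cancel₀ t two_ne_zero]
  rcases eq_or_ne (cos (t / 2)) 0 with h | h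
  · simp [hsin, h, cos_add_one_eq_two_mul_cos_half_sq]
  · rw [cos_add_one_eq_two_mul_cos_half_sq, log_mul two_ne_zero (by positivity), log_pow, hsin]
    push_cast
    ring

theorem continuous_sin_mul_log_cos_add_one : Continuous fun t => sin t * log (cos t + 1) := by
  simp only [sin_mul_log_cos_add_one]
  have := continuous_mul_log
  fun_prop

theorem continuous_sin_nat_mul_mul_log_cos_add_one (n : ℕ) :
    Continuous fun t => sin (n * t) * log (cos t + 1) := by
  have h (t : ℝ) :
      sin (n * t) = (Polynomial.Chebyshev.U ℝ (n - 1 : ℤ)).eval (cos t) * sin t := by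
    rw [Polynomial.Chebyshev.U_real_cos]
    push_cast
    ring_nf
  simp only [h, mul_assoc]
  exact ((Polynomial.continuous _).comp continuous_cos).mul continuous_sin_mul_log_cos_add_one

/-- `sin (n t) · tan (t / 2) = sin (n t) sin t / (cos t + 1)`, as a trigonometric polynomial. -/
noncomputable def sinMulTanHalf : ℕ → ℝ → ℝ
  | 0, _ => 0
  | n + 1, t => cos (n * t) - cos ((n + 1) * t) - sinMulTanHalf n t

@[fun_prop]
theorem continuous_sinMulTanHalf (n : ℕ) : Continuous (sinMulTanHalf n) := by
  induction n with
  | zero => exact continuous_const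
  | succ n ih =>
    simp only [sinMulTanHalf]
    fun_prop

theorem cos_add_one_mul_sinMulTanHalf (n : ℕ) (t : ℝ) :
    (cos t + 1) * sinMulTanHalf n t = sin (n * t) * sin t := by
  induction n with
  | zero => simp [sinMulTanHalf]
  | succ n ih =>
    rw [sinMulTanHalf, Nat.cast_succ, add_mul (n : ℝ), one_mul, sin_add, cos_add]
    linear_combination -ih - cos (n * t) * sin_sq_add_cos_sq t

theorem integral_sinMulTanHalf_succ (n : ℕ) :
    ∫ t in 0..π, sinMulTanHalf (n + 1) t = (-1) ^ n * π := by
  have hstep (m : ℕ) : ∫ t in 0..π, sinMulTanHalf (m + 1) t =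
      cosCoeff 1 m - cosCoeff 1 (m + 1 : ℕ) - ∫ t in 0..π, sinMulTanHalf m t := by
    simp only [sinMulTanHalf, cosCoeff, Pi.one_apply, mul_one, Nat.cast_succ]
    rw [integral_sub, integral_sub] <;>
      apply Continuous.intervalIntegrable <;> fun_prop
  induction n with
  | zero =>
    rw [hstep, cosCoeff_one, cosCoeff_one]
    simp [sinMulTanHalf]
  | succ n ih =>
    rw [hstep, ih, cosCoeff_one, cosCoeff_one]
    simp [pow_succ]

theorem hasDerivAt_sin_nat_mul_mul_log_cos_add_one (n : ℕ) {t : ℝ} (ht : cos t + 1 ≠ 0) :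
    HasDerivAt (fun t => sin (n * t) * log (cos t + 1))
      (n * (cos (n * t) * log (cos t + 1)) - sinMulTanHalf n t) t := by
  have hsin : HasDerivAt (fun t => sin (n * t)) (cos (n * t) * n) t :=
    ((hasDerivAt_id t).const_mul (n : ℝ)).sin.congr_deriv (by simp)
  have hlog : HasDerivAt (fun t => log (cos t + 1)) (-sin t / (cos t + 1)) t :=
    ((hasDerivAt_cos t).add_const 1).log ht
  refine (hsin.mul hlog).congr_deriv ?_
  have hR : sinMulTanHalf n t = sin (n * t) * sin t / (cos t + 1) := by
    rw [eq_div_iff ht, mul_comm, cos_add_one_mul_sinMulTanHalf]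
  rw [hR]
  ring

theorem cosCoeff_log_cos_add_one {n : ℕ} (hn : n ≠ 0) :
    cosCoeff (fun t => log (cos t + 1)) n = (-1) ^ (n + 1) * π / n := by
  have hJ := (intervalIntegrable_mul_log_cos_add_one (g := fun t => cos (n * t))
    (by fun_prop) 0 π).const_mul (n : ℝ)
  have hR := (continuous_sinMulTanHalf n).intervalIntegrable (μ := volume) 0 π
  have hFTC := integral_eq_sub_of_hasDerivAt_of_le pi_pos.le
    (continuous_sin_nat_mul_mul_log_cos_add_one n).continuousOn
    (fun t ht => hasDerivAt_sin_nat_mul_mul_log_cos_add_one n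
      (cos_add_one_pos (by linarith [ht.1, pi_pos]) ht.2).ne') (hJ.sub hR)
  obtain ⟨m, rfl⟩ := Nat.exists_eq_add_one_of_ne_zero hn
  rw [integral_sub hJ hR, integral_const_mul, integral_sinMulTanHalf_succ,
    sin_nat_mul_pi, mul_zero, sin_zero] at hFTC
  simp only [zero_mul, sub_zero] at hFTC
  rw [cosCoeff]
  field_simp
  linear_combination hFTC - π * pow_succ (-1 : ℝ) m

theorem mul_mul_log_mul (x y : ℝ) :
    x * y * log (x * y) = y * (x * log x) + x * (y * log y) := by
  have h := negMulLog_mul x y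
  simp only [negMulLog] at h
  linarith

theorem integral_mul_cos_add_one_mul_log_mul_cos (c ν : ℝ) :
    ∫ t in 0..π, c * (cos t + 1) * log (c * (cos t + 1)) * cos (ν * t) =
      c * log c * cosCoeff (fun t => cos t + 1) ν +
        c * cosCoeff (fun t => (cos t + 1) * log (cos t + 1)) ν := by
  simp only [cosCoeff, mul_mul_log_mul]
  rw [← integral_const_mul, ← integral_const_mul, ← integral_add]
  · congr 1
    ext t
    ring
  · exact Continuous.intervalIntegrable (by fun_prop) _ _
  · simpa only [mul_assoc] using (intervalIntegrable_mul_log_cos_add_one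
      (g := fun t => cos (ν * t) * (cos t + 1)) (by fun_prop) 0 π).const_mul c

theorem cosCoeff_cos_add_one (ν : ℝ) : cosCoeff (fun t => cos t + 1) ν =
    cosCoeff 1 ν + (cosCoeff 1 (ν + 1) + cosCoeff 1 (ν - 1)) / 2 := by
  simpa using cosCoeff_cos_add_one_mul (f := 1) intervalIntegrable_const ν

theorem cosCoeff_cos_add_one_zero : cosCoeff (fun t => cos t + 1) 0 = π := by
  have C0 := cosCoeff_one 0
  have C1 := cosCoeff_one 1
  norm_num at C0 C1
  rw [cosCoeff_cos_add_one, zero_add, zero_sub, cosCoeff_neg, C0, C1]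
  ring

theorem cosCoeff_cos_add_one_one : cosCoeff (fun t => cos t + 1) 1 = π / 2 := by
  have C0 := cosCoeff_one 0
  have C1 := cosCoeff_one 1
  have C2 := cosCoeff_one 2
  norm_num at C0 C1 C2
  rw [cosCoeff_cos_add_one, sub_self, one_add_one_eq_two, C0, C1, C2]
  ring

theorem cosCoeff_cos_add_one_of_two_le {k : ℕ} (hk : 2 ≤ k) :
    cosCoeff (fun t => cos t + 1) k = 0 := by
  rw [cosCoeff_cos_add_one, ← Nat.cast_pred (by omega), ← Nat.cast_succ,
    cosCoeff_one, cosCoeff_one, cosCoeff_one, if_neg (by omega), if_neg (by omega),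
    if_neg (by omega)]
  ring

theorem cosCoeff_cos_add_one_mul_log_cos_add_one_zero :
    cosCoeff (fun t => (cos t + 1) * log (cos t + 1)) 0 = π - π * log 2 := by
  have J1 := cosCoeff_log_cos_add_one one_ne_zero
  norm_num at J1
  rw [cosCoeff_cos_add_one_mul (intervalIntegrable_log_cos_add_one 0 π), zero_add, zero_sub,
    cosCoeff_neg, cosCoeff_log_cos_add_one_zero, J1]
  ring

theorem cosCoeff_cos_add_one_mul_log_cos_add_one_one :
    cosCoeff (fun t => (cos t + 1) * log (cos t + 1)) 1 = 3 * π / 4 - π / 2 * log 2 := by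
  have J1 := cosCoeff_log_cos_add_one one_ne_zero
  have J2 := cosCoeff_log_cos_add_one two_ne_zero
  norm_num at J1 J2
  rw [cosCoeff_cos_add_one_mul (intervalIntegrable_log_cos_add_one 0 π), sub_self,
    one_add_one_eq_two, cosCoeff_log_cos_add_one_zero, J1, J2]
  ring

theorem cosCoeff_cos_add_one_mul_log_cos_add_one_of_two_le {k : ℕ} (hk : 2 ≤ k) :
    cosCoeff (fun t => (cos t + 1) * log (cos t + 1)) k =
      (-1) ^ k * π / (k * ((k : ℝ) ^ 2 - 1)) := by
  rw [cosCoeff_cos_add_one_mul (intervalIntegrable_log_cos_add_one 0 π),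
    ← Nat.cast_pred (by omega), ← Nat.cast_succ, cosCoeff_log_cos_add_one (by omega),
    cosCoeff_log_cos_add_one (by omega), cosCoeff_log_cos_add_one (by omega),
    Nat.sub_add_cancel (by omega : 1 ≤ k), Nat.cast_pred (by omega)]
  have hk' : (2 : ℝ) ≤ k := by exact_mod_cast hk
  have h₁ : (k : ℝ) - 1 ≠ 0 := by linarith
  have h₂ : (k : ℝ) ^ 2 - 1 ≠ 0 := by nlinarith
  field_simp
  push_cast [pow_succ]
  ring

theorem chebyshev_coefficients_of_entropy_function (x₀ : ℝ) (hx₀ : 0 < x₀) :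
    (2 / Real.pi) * (∫ t in (0:ℝ)..Real.pi,
        ((x₀ / 2) * (Real.cos t + 1)) * Real.log ((x₀ / 2) * (Real.cos t + 1)) *
          Real.cos ((0 : ℕ) * t)) = x₀ * (Real.log (x₀ / 4) + 1) ∧
    (2 / Real.pi) * (∫ t in (0:ℝ)..Real.pi,
        ((x₀ / 2) * (Real.cos t + 1)) * Real.log ((x₀ / 2) * (Real.cos t + 1)) *
          Real.cos ((1 : ℕ) * t)) = (x₀ / 4) * (2 * Real.log (x₀ / 4) + 3) ∧
    ∀ k : ℕ, 2 ≤ k →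
      (2 / Real.pi) * (∫ t in (0:ℝ)..Real.pi,
          ((x₀ / 2) * (Real.cos t + 1)) * Real.log ((x₀ / 2) * (Real.cos t + 1)) *
            Real.cos (k * t)) = (-1) ^ k * x₀ / (k * ((k : ℝ) ^ 2 - 1)) := by
  have hlog : log (x₀ / 4) = log (x₀ / 2) - log 2 := by
    rw [← log_div (by positivity) two_ne_zero]
    ring_nf
  simp only [integral_mul_cos_add_one_mul_log_mul_cos, Nat.cast_zero, Nat.cast_one]
  refine ⟨?_, ?_, fun k hk => ?_⟩
  · rw [cosCoeff_cos_add_one_zero, cosCoeff_cos_add_one_mul_log_cos_add_one_zero, hlog]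
    field_simp
    ring
  · rw [cosCoeff_cos_add_one_one, cosCoeff_cos_add_one_mul_log_cos_add_one_one, hlog]
    field_simp
    ring
  · rw [cosCoeff_cos_add_one_of_two_le hk, cosCoeff_cos_add_one_mul_log_cos_add_one_of_two_le hk]
    field_simp
    ring
end

section
/- Let x₀ > 0 and n ≥ 1. Let p_n(x) = a₀/2 + ∑_{k=1}^n a_k T_k(x) be the degree-n truncated Chebyshev expansion of L(x) = x log x on [0, x₀], where T_k are Chebyshev polynomials of the first kind shifted to [0, x₀] and the coefficients are a₀ = x₀(log(x₀/4)+1), a₁ = (x₀/4)(2log(x₀/4)+3), a_k = (-1)^k x₀/(k(k²-1)) for k ≥ 2. Then sup_{x ∈ [0,x₀]} |L(x) - p_n(x)| ≤ x₀ / (2n(n+1)). -/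
/-!
Put `x = x₀ (1 + cos θ) / 2`, so that `T_k (2x/x₀ - 1) = cos kθ`, and `c_k = (-1)^k / (k (k² - 1))`,
so that `a_k = x₀ c_k` for `k ≥ 2`. For `|z| < 1`, partial fractions and the logarithm series give
`∑ c_k z^k = (1 + z)² log (1 + z) / (2z) - 3z/4 - 1/2`. The right side stays continuous up to the
unit circle (`u² log u → 0` takes care of `z = -1`), so Abel's theorem evaluates the absolutely
convergent series at `z = e^{iθ}`; there `(1 + z)² / (2z) = 1 + cos θ` is real and the real part
is `(1 + cos θ) log (2 + 2 cos θ) / 2 - 3 cos θ / 4 - 1/2 = (x log x - a₀/2 - a₁ cos θ) / x₀`.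
The truncation error is the tail `x₀ ∑_{k>n} c_k cos kθ`, bounded by `x₀ ∑_{k>n} 1/(k(k²-1))`,
which telescopes to `x₀ / (2n(n+1))`.
-/

open Filter Topology Polynomial.Chebyshev

/-- Vanishes at `k = 0, 1`, where the denominator is zero. -/
noncomputable def chebCoeff (k : ℕ) : ℝ := (-1) ^ k / (k * ((k : ℝ) ^ 2 - 1))

theorem hasSum_sub_succ_of_antitone {f : ℕ → ℝ} (hf : Antitone f)
    (hf0 : Tendsto f atTop (𝓝 0)) : HasSum (fun i ↦ f i - f (i + 1)) (f 0) := by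
  rw [hasSum_iff_tendsto_nat_of_nonneg fun i ↦ sub_nonneg.2 (hf i.le_succ)]
  simp only [Finset.sum_range_sub']
  simpa using tendsto_const_nhds.sub hf0

theorem abs_chebCoeff (k : ℕ) : |chebCoeff k| = (k * ((k : ℝ) ^ 2 - 1))⁻¹ := by
  rcases lt_or_ge k 2 with hk | hk
  · interval_cases k <;> simp [chebCoeff]
  · have : (2 : ℝ) ≤ k := by exact_mod_cast hk
    rw [chebCoeff, abs_div, abs_pow, abs_neg, abs_one, one_pow, one_div,
      abs_of_pos (by nlinarith)]

theorem hasSum_abs_chebCoeff_nat_add {n : ℕ} (hn : 1 ≤ n) :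
    HasSum (fun k ↦ |chebCoeff (k + (n + 1))|) (2 * n * (n + 1) : ℝ)⁻¹ := by
  set g : ℕ → ℝ := fun i ↦ (2 * (i + n) * (i + n + 1) : ℝ)⁻¹
  have hn' : (1 : ℝ) ≤ n := by exact_mod_cast hn
  have hg : Antitone g := by
    refine antitone_nat_of_succ_le fun i ↦ ?_
    simp only [g]
    gcongr <;> linarith
  have hg0 : Tendsto g atTop (𝓝 0) := by
    refine tendsto_inv_atTop_zero.comp (tendsto_atTop_mono (fun i ↦ ?_) tendsto_natCast_atTop_atTop)
    have : (0 : ℝ) ≤ i := i.cast_nonneg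
    nlinarith
  convert hasSum_sub_succ_of_antitone hg hg0 using 1
  · ext i
    have : (0 : ℝ) ≤ i := i.cast_nonneg
    have h1 : (i : ℝ) + n ≠ 0 := by positivity
    have h2 : (i : ℝ) + n + 1 ≠ 0 := by positivity
    have h3 : (i : ℝ) + n + 2 ≠ 0 := by positivity
    simp only [abs_chebCoeff, g]
    push_cast
    rw [show ((i : ℝ) + (n + 1)) ^ 2 - 1 = (i + n) * (i + n + 2) by ring]
    field_simp
    ring
  · simp [g]

theorem summable_abs_chebCoeff : Summable fun k ↦ |chebCoeff k| :=
  (summable_nat_add_iff 2).1 (hasSum_abs_chebCoeff_nat_add le_rfl).summable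

noncomputable def chebCoeffGenFun (z : ℂ) : ℂ :=
  (1 + z) ^ 2 * Complex.log (1 + z) / (2 * z) - 3 * z / 4 - 1 / 2

theorem hasSum_chebCoeff_mul_pow {z : ℂ} (hz : ‖z‖ < 1) (hz0 : z ≠ 0) :
    HasSum (fun k ↦ (chebCoeff k : ℂ) * z ^ k) (chebCoeffGenFun z) := by
  set ℓ := Complex.log (1 + z)
  set s : ℕ → ℂ := fun n ↦ (-1) ^ (n + 1) * z ^ n / n
  have hs : HasSum s ℓ := Complex.hasSum_taylorSeries_log hz
  have hshift (m : ℕ) : HasSum (fun k ↦ s (k + m)) (ℓ - ∑ i ∈ Finset.range m, s i) :=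
    (hasSum_nat_add_iff' m).2 hs
  have hs1 : HasSum (fun k ↦ s (k + 1)) ℓ := by simpa [s] using hshift 1
  have hs2 : HasSum (fun k ↦ s (k + 2)) (ℓ - z) := by
    simpa [s, Finset.sum_range_succ] using hshift 2
  have hs3 : HasSum (fun k ↦ s (k + 3)) (ℓ - z + z ^ 2 / 2) := by
    convert hshift 3 using 1
    simp [s, Finset.sum_range_succ]
    ring
  refine (hasSum_nat_add_iff' 2).1 ?_
  have hval : chebCoeffGenFun z - ∑ i ∈ Finset.range 2, (chebCoeff i : ℂ) * z ^ i =
      z / 2 * ℓ + (ℓ - z) + (2 * z)⁻¹ * (ℓ - z + z ^ 2 / 2) := by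
    simp [chebCoeffGenFun, chebCoeff, Finset.sum_range_succ, ℓ]
    field_simp
    ring
  rw [hval]
  -- partial fractions: `1 / (k (k² - 1)) = -1 / k + 1 / (2 (k - 1)) + 1 / (2 (k + 1))`
  refine (((hs1.mul_left (z / 2)).add hs2).add (hs3.mul_left (2 * z)⁻¹)).congr_fun fun k ↦ ?_
  have h1 : (k : ℂ) + 1 ≠ 0 := by exact_mod_cast k.succ_ne_zero
  have h2 : (k : ℂ) + 2 ≠ 0 := by exact_mod_cast (k + 1).succ_ne_zero
  have h3 : (k : ℂ) + 3 ≠ 0 := by exact_mod_cast (k + 2).succ_ne_zero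
  simp only [chebCoeff, s]
  push_cast
  rw [show ((k : ℂ) + 2) ^ 2 - 1 = (k + 1) * (k + 3) by ring]
  field_simp
  ring

theorem Complex.tendsto_sq_mul_log_zero :
    Tendsto (fun u : ℂ ↦ u ^ 2 * log u) (𝓝 0) (𝓝 0) := by
  set b : ℂ → ℝ := fun u ↦ ‖u‖ * |‖u‖ * Real.log ‖u‖| + Real.pi * ‖u‖ ^ 2
  have hb : Tendsto b (𝓝 0) (𝓝 0) := by
    have : Continuous b := by fun_prop
    simpa [b] using this.tendsto 0
  refine squeeze_zero_norm (fun u ↦ ?_) hb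
  have hlog : ‖log u‖ ≤ |Real.log ‖u‖| + Real.pi := by
    have := norm_le_abs_re_add_abs_im (log u)
    rw [log_re, log_im] at this
    linarith [abs_arg_le_pi u]
  calc ‖u ^ 2 * log u‖ = ‖u‖ ^ 2 * ‖log u‖ := by rw [norm_mul, norm_pow]
    _ ≤ ‖u‖ ^ 2 * (|Real.log ‖u‖| + Real.pi) := by gcongr
    _ = b u := by simp only [b, abs_mul, abs_norm]; ring

theorem Complex.continuousAt_sq_mul_log {u : ℂ} (hu : 0 ≤ u.re) :
    ContinuousAt (fun u : ℂ ↦ u ^ 2 * log u) u := by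
  rcases eq_or_ne u 0 with rfl | hu0
  · simpa [ContinuousAt] using tendsto_sq_mul_log_zero
  · have hslit : u ∈ slitPlane := by
      rw [mem_slitPlane_iff]
      by_contra! h
      exact hu0 (ext (le_antisymm h.1 hu) h.2)
    exact (continuousAt_id.pow 2).mul (continuousAt_clog hslit)

theorem continuousAt_chebCoeffGenFun {w : ℂ} (hw : ‖w‖ = 1) : ContinuousAt chebCoeffGenFun w := by
  have hw0 : w ≠ 0 := norm_ne_zero_iff.1 (hw ▸ one_ne_zero)
  have hre : 0 ≤ (1 + w).re := by
    have := neg_le_of_abs_le (hw ▸ Complex.abs_re_le_norm w)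
    simp only [Complex.add_re, Complex.one_re]
    linarith
  have := (Complex.continuousAt_sq_mul_log hre).comp (continuousAt_const.add continuousAt_id)
  unfold chebCoeffGenFun
  fun_prop (disch := simp [hw0])

theorem hasSum_mul_pow_of_continuousAt {c : ℕ → ℂ} {G : ℂ → ℂ} {w : ℂ}
    (hc : Summable fun n ↦ c n * w ^ n)
    (hG : ∀ r : ℝ, 0 < r → r < 1 → HasSum (fun n ↦ c n * (r * w) ^ n) (G (r * w)))
    (hGw : ContinuousAt G w) : HasSum (fun n ↦ c n * w ^ n) (G w) := by
  have habel := Complex.tendsto_tsum_powerSeries_nhdsWithin_lt hc.hasSum.tendsto_sum_nat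
  rw [tendsto_map'_iff] at habel
  have hradial : Tendsto (fun r : ℝ ↦ G (r * w)) (𝓝[<] 1) (𝓝 (G w)) := by
    have : Continuous fun r : ℝ ↦ (r : ℂ) * w := by fun_prop
    exact hGw.tendsto.comp (tendsto_nhdsWithin_of_tendsto_nhds (this.tendsto' 1 w (by simp)))
  have heq : (fun r : ℝ ↦ G (r * w)) =ᶠ[𝓝[<] 1]
      fun r : ℝ ↦ ∑' n, c n * w ^ n * (r : ℂ) ^ n := by
    filter_upwards [Ioo_mem_nhdsLT zero_lt_one] with r hr
    simp only [mul_assoc, ← mul_pow, mul_comm w]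
    exact (hG r hr.1 hr.2).tsum_eq.symm
  rw [tendsto_nhds_unique (hradial.congr' heq) habel]
  exact hc.hasSum

theorem re_chebCoeffGenFun_exp_mul_I (θ : ℝ) : (chebCoeffGenFun (Complex.exp (θ * Complex.I))).re =
    (1 + Real.cos θ) * Real.log (2 + 2 * Real.cos θ) / 2 - 3 * Real.cos θ / 4 - 1 / 2 := by
  set w := Complex.exp (θ * Complex.I)
  set c := Real.cos θ
  set s := Real.sin θ
  have hw : w = c + s * Complex.I := by
    simp [w, c, s, Complex.exp_mul_I, ← Complex.ofReal_cos, ← Complex.ofReal_sin]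
  have hpyth : s ^ 2 + c ^ 2 = 1 := Real.sin_sq_add_cos_sq θ
  have hsq : (1 + w) ^ 2 / (2 * w) = (1 + c : ℝ) := by
    have hw0 : w ≠ 0 := Complex.exp_ne_zero _
    have hpyth' : (s : ℂ) ^ 2 + (c : ℂ) ^ 2 = 1 := by exact_mod_cast hpyth
    rw [div_eq_iff (mul_ne_zero two_ne_zero hw0), hw]
    push_cast
    linear_combination (-1 : ℂ) * hpyth' + (s : ℂ) ^ 2 * Complex.I_sq
  have hnorm : ‖1 + w‖ ^ 2 = 2 + 2 * c := by
    rw [Complex.sq_norm, Complex.normSq_apply, hw]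
    simp
    linear_combination hpyth
  have hlog : Real.log ‖1 + w‖ = Real.log (2 + 2 * c) / 2 := by
    rw [← hnorm, Real.log_pow]
    ring
  rw [chebCoeffGenFun, mul_div_right_comm, hsq]
  simp [Complex.log_re, hlog, w, c, Complex.cos_ofReal_re]
  ring

theorem hasSum_chebCoeff_mul_cos (θ : ℝ) : HasSum (fun k ↦ chebCoeff k * Real.cos (k * θ))
    ((1 + Real.cos θ) * Real.log (2 + 2 * Real.cos θ) / 2 - 3 * Real.cos θ / 4 - 1 / 2) := by
  set w := Complex.exp (θ * Complex.I)
  have hw : ‖w‖ = 1 := Complex.norm_exp_ofReal_mul_I θ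
  have hpow (k : ℕ) : (chebCoeff k * w ^ k).re = chebCoeff k * Real.cos (k * θ) := by
    rw [← Complex.exp_nat_mul, ← mul_assoc, Complex.re_ofReal_mul]
    exact_mod_cast congrArg _ (Complex.exp_ofReal_mul_I_re (k * θ))
  have hsummable : Summable fun k ↦ (chebCoeff k : ℂ) * w ^ k := by
    refine summable_abs_chebCoeff.of_norm_bounded fun k ↦ ?_
    simp [hw]
  have hw_mul {r : ℝ} (hr0 : 0 < r) (hr1 : r < 1) : ‖(r : ℂ) * w‖ < 1 := by
    simpa [hw, abs_of_pos hr0] using hr1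
  have h := hasSum_mul_pow_of_continuousAt hsummable
    (fun r hr0 hr1 ↦ hasSum_chebCoeff_mul_pow (hw_mul hr0 hr1)
      (mul_ne_zero (by exact_mod_cast hr0.ne') (Complex.exp_ne_zero _)))
    (continuousAt_chebCoeffGenFun hw)
  rw [← re_chebCoeffGenFun_exp_mul_I]
  exact (Complex.hasSum_re h).congr_fun fun k ↦ (hpow k).symm

theorem hasSum_chebCoeff_mul_eval_T {t : ℝ} (ht : t ∈ Set.Icc (-1) 1) :
    HasSum (fun k ↦ chebCoeff k * (T ℝ k).eval t)
      ((1 + t) * Real.log (2 + 2 * t) / 2 - 3 * t / 4 - 1 / 2) := by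
  rw [← Real.cos_arccos ht.1 ht.2]
  simpa [T_real_cos] using hasSum_chebCoeff_mul_cos (Real.arccos t)

theorem two_mul_div_sub_one_mem_Icc {x₀ x : ℝ} (hx₀ : 0 < x₀) (hx : x ∈ Set.Icc 0 x₀) :
    2 * x / x₀ - 1 ∈ Set.Icc (-1) 1 := by
  have h0 : 0 ≤ 2 * x / x₀ := div_nonneg (by linarith [hx.1]) hx₀.le
  have h2 : 2 * x / x₀ ≤ 2 := by rw [div_le_iff₀ hx₀]; linarith [hx.2]
  constructor <;> linarith

theorem hasSum_chebyshev_mul_log {x₀ x : ℝ} (hx₀ : 0 < x₀) (hx : x ∈ Set.Icc 0 x₀) :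
    HasSum (fun k ↦ x₀ * chebCoeff k * (T ℝ k).eval (2 * x / x₀ - 1))
      (x * Real.log x - x₀ * (Real.log (x₀ / 4) + 1) / 2 -
        x₀ / 4 * (2 * Real.log (x₀ / 4) + 3) * (2 * x / x₀ - 1)) := by
  set t := 2 * x / x₀ - 1
  have hxt : x = x₀ / 4 * (2 + 2 * t) := by simp only [t]; field_simp; ring
  have hlog : x * Real.log x = x * (Real.log (x₀ / 4) + Real.log (2 + 2 * t)) := by
    rcases eq_or_ne x 0 with hx0 | hx0
    · simp [hx0]
    · rw [← Real.log_mul (by positivity) (right_ne_zero_of_mul (hxt ▸ hx0)), ← hxt]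
  have hval : x * Real.log x - x₀ * (Real.log (x₀ / 4) + 1) / 2 -
      x₀ / 4 * (2 * Real.log (x₀ / 4) + 3) * t =
      x₀ * ((1 + t) * Real.log (2 + 2 * t) / 2 - 3 * t / 4 - 1 / 2) := by
    rw [hlog, hxt]
    ring
  rw [hval]
  exact ((hasSum_chebCoeff_mul_eval_T (two_mul_div_sub_one_mem_Icc hx₀ hx)).mul_left x₀).congr_fun
    fun k ↦ mul_assoc _ _ _

theorem sum_Icc_mul_eval_T_eq {x₀ t : ℝ} {n : ℕ} (hn : 1 ≤ n) {a : ℕ → ℝ}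
    (hak : ∀ k : ℕ, 2 ≤ k → a k = (-1) ^ k * x₀ / (k * ((k : ℝ) ^ 2 - 1))) :
    ∑ k ∈ Finset.Icc 1 n, a k * (T ℝ k).eval t =
      a 1 * t + ∑ k ∈ Finset.range (n + 1), x₀ * chebCoeff k * (T ℝ k).eval t := by
  rw [Nat.range_succ_eq_Icc_zero, ← Finset.insert_Icc_add_one_left_eq_Icc n.zero_le,
    Finset.sum_insert (by simp), zero_add, ← Finset.insert_Icc_add_one_left_eq_Icc hn,
    Finset.sum_insert (by simp), Finset.sum_insert (by simp)]
  have hc0 : chebCoeff 0 = 0 := by simp [chebCoeff]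
  have hc1 : chebCoeff 1 = 0 := by simp [chebCoeff]
  simp only [hc0, hc1, mul_zero, zero_mul, zero_add, Nat.cast_one, T_one, Polynomial.eval_X]
  congr 1
  refine Finset.sum_congr rfl fun k hk ↦ ?_
  rw [hak k (Finset.mem_Icc.1 hk).1, chebCoeff]
  ring

/-- Error estimate for the truncated Chebyshev expansion of L(x) = x log x on [0, x₀]. -/
theorem chebyshev_truncation_error (x₀ : ℝ) (hx₀ : 0 < x₀) (n : ℕ) (hn : 1 ≤ n)
    (a : ℕ → ℝ)
    (ha0 : a 0 = x₀ * (Real.log (x₀ / 4) + 1))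
    (ha1 : a 1 = (x₀ / 4) * (2 * Real.log (x₀ / 4) + 3))
    (hak : ∀ k : ℕ, 2 ≤ k → a k = (-1) ^ k * x₀ / (k * ((k : ℝ) ^ 2 - 1)))
    (p : ℝ → ℝ)
    (hp : ∀ x, p x = a 0 / 2 +
      ∑ k ∈ Finset.Icc 1 n, a k * (Polynomial.Chebyshev.T ℝ (k : ℤ)).eval (2 * x / x₀ - 1)) :
    ∀ x ∈ Set.Icc 0 x₀, |x * Real.log x - p x| ≤ x₀ / (2 * n * (n + 1)) := by
  intro x hx
  set t := 2 * x / x₀ - 1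
  set b : ℕ → ℝ := fun k ↦ x₀ * chebCoeff k * (T ℝ k).eval t
  have hexp := hasSum_chebyshev_mul_log hx₀ hx
  rw [← ha0, ← ha1] at hexp
  have hpx : x * Real.log x - p x =
      (x * Real.log x - a 0 / 2 - a 1 * t) - ∑ k ∈ Finset.range (n + 1), b k := by
    rw [hp, sum_Icc_mul_eval_T_eq hn hak]
    ring
  have htail : HasSum (fun k ↦ b (k + (n + 1))) (x * Real.log x - p x) :=
    hpx ▸ (hasSum_nat_add_iff' (n + 1)).2 hexp
  have hbound : HasSum (fun k ↦ x₀ * |chebCoeff (k + (n + 1))|) (x₀ / (2 * n * (n + 1))) := by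
    simpa [div_eq_mul_inv] using (hasSum_abs_chebCoeff_nat_add hn).mul_left x₀
  refine htail.norm_le_of_bounded hbound fun k ↦ ?_
  have hT := abs_eval_T_real_le_one (k + (n + 1) : ℕ)
    (abs_le.2 (two_mul_div_sub_one_mem_Icc hx₀ hx))
  simp only [b, Real.norm_eq_abs, abs_mul, abs_of_pos hx₀]
  exact mul_le_of_le_one_right (by positivity) hT
end

section
/- ∫₀^{π/2} sin²(x) · log(4 sin²(x)) dx = π/4. -/
/-!
Since `sin² x · log (4 sin² x) = sin² x · (log 4 + 2 log (sin x))` and `sin² x = (1 - cos 2x) / 2`,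
the integral reduces to `∫ sin²`, the classical `∫₀^{π/2} log (sin x) = -(π/2) log 2`, and
`∫₀^{π/2} cos 2x · log (sin x) = -π/4`. The last one is elementary: `cos 2x · log (sin x)` has the
antiderivative `cos x · (sin x · log (sin x)) - (x + sin x cos x) / 2`, which is continuous on all
of `ℝ` because `t ↦ t log t` is.
-/

open Real intervalIntegral
open MeasureTheory (volume)

theorem hasDerivAt_cos_mul_sin_mul_log_sin_sub {x : ℝ} (hx : sin x ≠ 0) :
    HasDerivAt (fun t => cos t * (sin t * log (sin t)) - (t + sin t * cos t) / 2)
      (cos (2 * x) * log (sin x)) x := by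
  have hsin_cos := (hasDerivAt_sin x).mul (hasDerivAt_cos x)
  refine (((hasDerivAt_cos x).mul ((hasDerivAt_sin x).mul ((hasDerivAt_sin x).log hx))).sub
    (((hasDerivAt_id' x).add hsin_cos).div_const 2)).congr_deriv ?_
  simp only [Pi.mul_apply]
  rw [cos_two_mul, ← sin_sq_add_cos_sq x]
  field_simp
  ring

theorem integral_cos_two_mul_mul_log_sin {a b : ℝ} (ha : 0 ≤ a) (hab : a ≤ b) (hb : b ≤ π) :
    ∫ x in a..b, cos (2 * x) * log (sin x) =
      (cos b * (sin b * log (sin b)) - (b + sin b * cos b) / 2) -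
        (cos a * (sin a * log (sin a)) - (a + sin a * cos a) / 2) := by
  refine integral_eq_sub_of_hasDerivAt_of_le hab
    (f := fun t => cos t * (sin t * log (sin t)) - (t + sin t * cos t) / 2) ?_ (fun x hx => ?_) ?_
  · have hsin_mul_log := continuous_mul_log.comp continuous_sin
    exact Continuous.continuousOn (by fun_prop)
  · exact hasDerivAt_cos_mul_sin_mul_log_sin_sub
      (sin_pos_of_pos_of_lt_pi (ha.trans_lt hx.1) (hx.2.trans_le hb)).ne'
  · exact intervalIntegrable_log_sin.continuousOn_mul (by fun_prop)

theorem integral_cos_two_mul_mul_log_sin_zero_pi_div_two :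
    ∫ x in 0..π / 2, cos (2 * x) * log (sin x) = -(π / 4) := by
  rw [integral_cos_two_mul_mul_log_sin le_rfl (by positivity) (by linarith [pi_pos])]
  simp only [sin_pi_div_two, cos_pi_div_two, sin_zero, cos_zero]
  ring

theorem integral_sin_sq_mul_log_sin_zero_pi_div_two :
    ∫ x in 0..π / 2, sin x ^ 2 * log (sin x) = π / 8 - log 2 * π / 4 := by
  have hlog : IntervalIntegrable (fun x => log (sin x)) volume 0 (π / 2) :=
    intervalIntegrable_log_sin
  have hcos : IntervalIntegrable (fun x => cos (2 * x) * log (sin x)) volume 0 (π / 2) :=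
    hlog.continuousOn_mul (by fun_prop : Continuous fun x => cos (2 * x)).continuousOn
  have hsplit : (fun x => sin x ^ 2 * log (sin x)) =
      fun x => log (sin x) / 2 - cos (2 * x) * log (sin x) / 2 := by
    funext x
    rw [sin_sq_eq_half_sub]
    ring
  rw [hsplit, integral_sub (hlog.div_const 2) (hcos.div_const 2), integral_div, integral_div,
    integral_log_sin_zero_pi_div_two, integral_cos_two_mul_mul_log_sin_zero_pi_div_two]
  ring

theorem sin_sq_mul_log_four_mul_sin_sq (x : ℝ) :
    sin x ^ 2 * log (4 * sin x ^ 2) = 2 * log 2 * sin x ^ 2 + 2 * (sin x ^ 2 * log (sin x)) := by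
  rcases eq_or_ne (sin x) 0 with h | h
  · simp [h]
  · rw [show (4 : ℝ) * sin x ^ 2 = (2 * sin x) ^ 2 by ring, log_pow, log_mul two_ne_zero h]
    push_cast
    ring

theorem integral_sin_sq_log_four_sin_sq :
    ∫ x in (0:ℝ)..(Real.pi / 2), Real.sin x ^ 2 * Real.log (4 * Real.sin x ^ 2) =
      Real.pi / 4 := by
  have hsin_sq : Continuous fun x => sin x ^ 2 := by fun_prop
  have hlog : IntervalIntegrable (fun x => sin x ^ 2 * log (sin x)) volume 0 (π / 2) :=
    intervalIntegrable_log_sin.continuousOn_mul hsin_sq.continuousOn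
  simp_rw [sin_sq_mul_log_four_mul_sin_sq]
  rw [integral_add ((hsin_sq.intervalIntegrable _ _).const_mul _) (hlog.const_mul 2),
    integral_const_mul, integral_const_mul, integral_sin_sq,
    integral_sin_sq_mul_log_sin_zero_pi_div_two]
  simp only [sin_pi_div_two, cos_pi_div_two, sin_zero, cos_zero]
  ring
end
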